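/- For any block X = (X₁,…,X_L) of Golden codewords, det(Σᵢ XᵢXᵢᴴ) ≥ (Σᵢ |det(Xᵢ)|)² ≥ w_H(X)²·(1/5), where w_H(X) is the number of nonzero components. -/

import Mathlib

open Matrix

/-- The golden number θ = (1+√5)/2, as a complex number. -/
noncomputable def gold : ℂ := (1 + Real.sqrt 5) / 2

/-- Squared Frobenius norm of a 2×2 complex matrix. -/
noncomputable def fro2 (M : Matrix (Fin 2) (Fin 2) ℂ) : ℝ :=
  ∑ i, ∑ j, ‖M i j‖ ^ 2

/-- The element `a + bθ + i(c + dθ)` of `ℤ[i,θ]`. -/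
noncomputable def zit (a b c d : ℤ) : ℂ :=
  (a : ℂ) + b * gold + Complex.I * ((c : ℂ) + d * gold)

/-- Its conjugate under `θ ↦ 1 − θ`. -/
noncomputable def zitBar (a b c d : ℤ) : ℂ :=
  (a : ℂ) + b * (1 - gold) + Complex.I * ((c : ℂ) + d * (1 - gold))

/-- The matrix `[[w₁, w₂], [i·w̄₂, w̄₁]]` of the order `𝒪`, with
`w₁ = a + bθ + i(c+dθ)` and `w₂ = e + fθ + i(g+hθ)`. -/
noncomputable def Omat (a b c d e f g h : ℤ) : Matrix (Fin 2) (Fin 2) ℂ :=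
  !![zit a b c d, zit e f g h;
     Complex.I * zitBar e f g h, zitBar a b c d]

/-- Membership in the order `𝒪`. -/
def inO (W : Matrix (Fin 2) (Fin 2) ℂ) : Prop :=
  ∃ a b c d e f g h : ℤ, W = Omat a b c d e f g h

/-- `α = 1 + i·θ̄ = 1 + i(1−θ)`. -/
noncomputable def alphaG : ℂ := 1 + Complex.I * (1 - gold)

/-- `ᾱ = 1 + i·θ`. -/
noncomputable def alphaBarG : ℂ := 1 + Complex.I * gold

/-- `A = diag(α, ᾱ)`. -/
noncomputable def Amat : Matrix (Fin 2) (Fin 2) ℂ := !![alphaG, 0; 0, alphaBarG]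

/-- Membership in the Golden Code `𝒢 = (1/√5)·A·𝒪`. -/
def inG (X : Matrix (Fin 2) (Fin 2) ℂ) : Prop :=
  ∃ W, inO W ∧ X = ((Real.sqrt 5 : ℂ))⁻¹ • (Amat * W)

/-!
For `2 × 2` matrices `det (A + B) = det A + det B + tr (A * adj B)` and
`adj (Y Yᴴ) = (adj Y)ᴴ adj Y`, so adding `Y Yᴴ` to `∑ₖ Xₖ Xₖᴴ` adds `|det Y|² + ∑ₖ ‖adj Y * Xₖ‖_F²`
to the determinant: this is the paper's identity built up one codeword at a time. As
`‖M‖_F² ≥ 2 |det M|` for `2 × 2` matrices and `det (adj Y * Xₖ) = det Y * det Xₖ`,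
induction gives `det (∑ₖ Xₖ Xₖᴴ) ≥ (∑ₖ |det Xₖ|)²`.

For a codeword `X = A W / √5` we have `det X = (2 + i) det W / 5`, where
`det W = q(u, v) - i q(s, t) ∈ ℤ[i]` and `q(u, v) = u² + uv - v²`. As `4 q(u, v) = (2u + v)² - 5v²`,
`det W = 0` yields `x² - i y² = 5 (z² - i w²)`. Modulo the prime `2 + i` of `ℤ[i]`, `i ≡ 3` is a
non-square, so `2 + i` divides `x, y, z, w` and the quotients solve the same equation: infinite
descent on norms forces `W = 0`. Otherwise `|det W| ≥ 1`, so `|det X| ≥ 1 / √5`.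
-/

open scoped ComplexOrder

local notation "ℤ[i]" => GaussianInt

theorem det_add_fin_two {R : Type*} [CommRing R] (A B : Matrix (Fin 2) (Fin 2) R) :
    (A + B).det = A.det + B.det + (A * B.adjugate).trace := by
  simp only [det_fin_two, adjugate_fin_two, trace_fin_two, mul_apply, Fin.sum_univ_two,
    Matrix.add_apply, of_apply, cons_val', cons_val_zero, cons_val_one, empty_val',
    cons_val_fin_one]
  ring

theorem trace_mul_conjTranspose_eq_fro2 (M : Matrix (Fin 2) (Fin 2) ℂ) :
    (M * Mᴴ).trace = fro2 M := by
  simp [fro2, trace, mul_apply, Complex.mul_conj']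

theorem two_mul_norm_det_le_fro2 (M : Matrix (Fin 2) (Fin 2) ℂ) :
    2 * ‖M.det‖ ≤ fro2 M := by
  have hdet : ‖M.det‖ ≤ ‖M 0 0‖ * ‖M 1 1‖ + ‖M 0 1‖ * ‖M 1 0‖ := by
    rw [det_fin_two, ← norm_mul, ← norm_mul]; exact norm_sub_le _ _
  simp only [fro2, Fin.sum_univ_two]
  nlinarith [sq_nonneg (‖M 0 0‖ - ‖M 1 1‖), sq_nonneg (‖M 0 1‖ - ‖M 1 0‖)]

theorem two_mul_norm_det_mul_le_fro2_adjugate_mul (X Y : Matrix (Fin 2) (Fin 2) ℂ) :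
    2 * (‖Y.det‖ * ‖X.det‖) ≤ fro2 (Y.adjugate * X) := by
  simpa [det_adjugate] using two_mul_norm_det_le_fro2 (Y.adjugate * X)

theorem det_sum_add_mul_conjTranspose {ι : Type*} (s : Finset ι)
    (X : ι → Matrix (Fin 2) (Fin 2) ℂ) (Y : Matrix (Fin 2) (Fin 2) ℂ) :
    (∑ k ∈ s, X k * (X k)ᴴ + Y * Yᴴ).det =
      (∑ k ∈ s, X k * (X k)ᴴ).det +
        ((‖Y.det‖ ^ 2 + ∑ k ∈ s, fro2 (Y.adjugate * X k) : ℝ) : ℂ) := by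
  have hadj : (Y * Yᴴ).adjugate = Y.adjugateᴴ * Y.adjugate := by
    rw [adjugate_mul_distrib, adjugate_conjTranspose]
  have htrace (k : ι) : (X k * (X k)ᴴ * (Y * Yᴴ).adjugate).trace = fro2 (Y.adjugate * X k) := by
    rw [hadj, ← Matrix.mul_assoc, trace_mul_comm, ← trace_mul_conjTranspose_eq_fro2,
      conjTranspose_mul]
    simp only [Matrix.mul_assoc]
  rw [det_add_fin_two, det_mul, det_conjTranspose, Complex.star_def, Complex.mul_conj',
    Finset.sum_mul, trace_sum]
  push_cast
  simp only [htrace]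
  ring

theorem sq_sum_norm_det_le_det_sum_mul_conjTranspose {ι : Type*} (s : Finset ι)
    (X : ι → Matrix (Fin 2) (Fin 2) ℂ) :
    (((∑ k ∈ s, ‖(X k).det‖) ^ 2 : ℝ) : ℂ) ≤ (∑ k ∈ s, X k * (X k)ᴴ).det := by
  classical
  induction s using Finset.induction_on with
  | empty => simp
  | insert j s hj ih =>
    have hcross : 2 * (‖(X j).det‖ * ∑ k ∈ s, ‖(X k).det‖) ≤
        ∑ k ∈ s, fro2 ((X j).adjugate * X k) := by
      rw [Finset.mul_sum, Finset.mul_sum]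
      exact Finset.sum_le_sum fun k _ => two_mul_norm_det_mul_le_fro2_adjugate_mul _ _
    rw [Finset.sum_insert hj, Finset.sum_insert hj, add_comm (X j * _),
      det_sum_add_mul_conjTranspose]
    calc (((‖(X j).det‖ + ∑ k ∈ s, ‖(X k).det‖) ^ 2 : ℝ) : ℂ)
        = (((∑ k ∈ s, ‖(X k).det‖) ^ 2 : ℝ) : ℂ) +
            ((‖(X j).det‖ ^ 2 + 2 * (‖(X j).det‖ * ∑ k ∈ s, ‖(X k).det‖) : ℝ) : ℂ) := by
          push_cast; ring
      _ ≤ _ := add_le_add ih (Complex.real_le_real.mpr (by linarith))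

theorem le_norm_of_ofReal_le {r : ℝ} {z : ℂ} (h : (r : ℂ) ≤ z) : r ≤ ‖z‖ := by
  simpa using (Complex.le_def.mp h).1.trans (Complex.re_le_norm z)

namespace GaussianInt

/-- Reduction modulo `2 + i`, i.e. `ℤ[i] ⧸ (2 + i) ≅ ZMod 5` with `i ↦ 3`. -/
noncomputable def toZModFive : ℤ[i] →+* ZMod 5 := Zsqrtd.lift ⟨3, by decide⟩

theorem toZModFive_apply (z : ℤ[i]) : toZModFive z = z.re + z.im * 3 := by
  simp [toZModFive, Zsqrtd.lift]

theorem dvd_of_toZModFive_eq_zero {z : ℤ[i]} (h : toZModFive z = 0) : (⟨2, 1⟩ : ℤ[i]) ∣ z := by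
  rw [toZModFive_apply] at h
  have h' : ((z.re + 3 * z.im : ℤ) : ZMod 5) = 0 := by push_cast; linear_combination h
  obtain ⟨k, hk⟩ := (ZMod.intCast_zmod_eq_zero_iff_dvd _ 5).mp h'
  exact ⟨⟨2 * k - z.im, z.im - k⟩, by ext <;> simp <;> omega⟩

theorem dvd_of_toZModFive_sq_sub_sqrtd_mul_sq {x y : ℤ[i]}
    (h : toZModFive (x ^ 2 - Zsqrtd.sqrtd * y ^ 2) = 0) :
    (⟨2, 1⟩ : ℤ[i]) ∣ x ∧ (⟨2, 1⟩ : ℤ[i]) ∣ y := by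
  have nonsquare : ∀ a b : ZMod 5, a ^ 2 - 3 * b ^ 2 = 0 → a = 0 ∧ b = 0 := by decide
  have hi : toZModFive Zsqrtd.sqrtd = 3 := by rw [toZModFive_apply]; decide
  simp only [map_sub, map_mul, map_pow, hi] at h
  obtain ⟨hx, hy⟩ := nonsquare _ _ h
  exact ⟨dvd_of_toZModFive_eq_zero hx, dvd_of_toZModFive_eq_zero hy⟩

theorem exists_dvd_of_sq_sub_sqrtd_mul_sq_eq_five_mul {x y z w : ℤ[i]}
    (h : x ^ 2 - Zsqrtd.sqrtd * y ^ 2 = 5 * (z ^ 2 - Zsqrtd.sqrtd * w ^ 2)) :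
    ∃ a b c d : ℤ[i], a ^ 2 - Zsqrtd.sqrtd * b ^ 2 = 5 * (c ^ 2 - Zsqrtd.sqrtd * d ^ 2) ∧
      x = ⟨2, 1⟩ * a ∧ y = ⟨2, 1⟩ * b ∧ z = ⟨2, 1⟩ * c ∧ w = ⟨2, 1⟩ * d := by
  have hfive : (5 : ℤ[i]) = ⟨2, 1⟩ * ⟨2, -1⟩ := by decide
  have hπ : (⟨2, 1⟩ : ℤ[i]) ≠ 0 := by decide
  obtain ⟨⟨a, rfl⟩, ⟨b, rfl⟩⟩ := dvd_of_toZModFive_sq_sub_sqrtd_mul_sq (x := x) (y := y) (by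
    rw [h, map_mul, map_ofNat, show (5 : ZMod 5) = 0 from rfl, zero_mul])
  have hab : (⟨2, 1⟩ : ℤ[i]) * (a ^ 2 - Zsqrtd.sqrtd * b ^ 2) =
      ⟨2, -1⟩ * (z ^ 2 - Zsqrtd.sqrtd * w ^ 2) := by
    refine mul_left_cancel₀ hπ ?_
    rw [hfive] at h
    linear_combination h
  obtain ⟨⟨c, rfl⟩, ⟨d, rfl⟩⟩ := dvd_of_toZModFive_sq_sub_sqrtd_mul_sq (x := z) (y := w) (by
    have h' := congrArg toZModFive hab
    have hπ₀ : toZModFive ⟨2, 1⟩ = 0 := by rw [toZModFive_apply]; decide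
    have hπ' : toZModFive ⟨2, -1⟩ = -1 := by rw [toZModFive_apply]; decide
    rw [map_mul, map_mul, hπ₀, hπ', zero_mul] at h'
    linear_combination h')
  refine ⟨a, b, c, d, mul_left_cancel₀ hπ ?_, rfl, rfl, rfl, rfl⟩
  rw [hfive]
  linear_combination hab

theorem norm_two_add_sqrtd_mul (u : ℤ[i]) : (⟨2, 1⟩ * u : ℤ[i]).norm = 5 * u.norm := by
  rw [Zsqrtd.norm_mul]; rfl

/-- `i` is not a norm from `ℚ(i, √5)` to `ℚ(i)`, in the integral form needed here. -/
theorem eq_zero_of_sq_sub_sqrtd_mul_sq_eq_five_mul {x y z w : ℤ[i]}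
    (h : x ^ 2 - Zsqrtd.sqrtd * y ^ 2 = 5 * (z ^ 2 - Zsqrtd.sqrtd * w ^ 2)) :
    x = 0 ∧ y = 0 ∧ z = 0 ∧ w = 0 := by
  induction hn : (x.norm + y.norm + z.norm + w.norm).toNat using Nat.strong_induction_on
    generalizing x y z w with
  | _ n ih =>
  obtain ⟨a, b, c, d, h', rfl, rfl, rfl, rfl⟩ := exists_dvd_of_sq_sub_sqrtd_mul_sq_eq_five_mul h
  simp only [norm_two_add_sqrtd_mul] at hn
  obtain ⟨rfl, rfl, rfl, rfl⟩ : a = 0 ∧ b = 0 ∧ c = 0 ∧ d = 0 := by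
    have := a.norm_nonneg; have := b.norm_nonneg; have := c.norm_nonneg; have := d.norm_nonneg
    by_cases hm : a.norm + b.norm + c.norm + d.norm = 0
    · simp only [← norm_eq_zero]; omega
    · exact ih _ (by omega) h' rfl
  simp

end GaussianInt

open GaussianInt

theorem gold_sq : gold ^ 2 = gold + 1 := by
  have h5 : ((Real.sqrt 5 : ℝ) : ℂ) ^ 2 = 5 := by
    rw [← Complex.ofReal_pow, Real.sq_sqrt (by norm_num)]; norm_num
  unfold gold; linear_combination h5 / 4

/-- The norm of `u + vθ` down to `ℤ[i]`, i.e. `(u + vθ)(u + vθ̄)`. -/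
def goldNorm (u v : ℤ[i]) : ℤ[i] := u ^ 2 + u * v - v ^ 2

theorem zit_eq (a b c d : ℤ) : zit a b c d = (⟨a, c⟩ : ℤ[i]) + (⟨b, d⟩ : ℤ[i]) * gold := by
  simp only [zit, toComplex_def']; ring

theorem zitBar_eq (a b c d : ℤ) :
    zitBar a b c d = (⟨a, c⟩ : ℤ[i]) + (⟨b, d⟩ : ℤ[i]) * (1 - gold) := by
  simp only [zitBar, toComplex_def']; ring

theorem det_Omat (a b c d e f g h : ℤ) :
    (Omat a b c d e f g h).det =
      ((goldNorm ⟨a, c⟩ ⟨b, d⟩ - Zsqrtd.sqrtd * goldNorm ⟨e, g⟩ ⟨f, h⟩ : ℤ[i]) : ℂ) := by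
  have hI : ((Zsqrtd.sqrtd : ℤ[i]) : ℂ) = Complex.I := by simp [toComplex_def]
  rw [Omat, det_fin_two_of, zit_eq, zit_eq, zitBar_eq, zitBar_eq]
  simp only [goldNorm, map_sub, map_mul, map_add, map_pow, hI]
  linear_combination (Complex.I * ((⟨f, h⟩ : ℤ[i]) : ℂ) ^ 2 - ((⟨b, d⟩ : ℤ[i]) : ℂ) ^ 2) * gold_sq

theorem goldNorm_sub_sqrtd_mul_goldNorm_ne_zero {a b c d e f g h : ℤ}
    (hW : Omat a b c d e f g h ≠ 0) :
    goldNorm ⟨a, c⟩ ⟨b, d⟩ - Zsqrtd.sqrtd * goldNorm ⟨e, g⟩ ⟨f, h⟩ ≠ 0 := by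
  intro h0
  have h5 : (2 * ⟨a, c⟩ + ⟨b, d⟩ : ℤ[i]) ^ 2 - Zsqrtd.sqrtd * (2 * ⟨e, g⟩ + ⟨f, h⟩ : ℤ[i]) ^ 2 =
      5 * ((⟨b, d⟩ : ℤ[i]) ^ 2 - Zsqrtd.sqrtd * (⟨f, h⟩ : ℤ[i]) ^ 2) := by
    simp only [goldNorm] at h0
    linear_combination 4 * h0
  obtain ⟨h₁, h₂, h₃, h₄⟩ := eq_zero_of_sq_sub_sqrtd_mul_sq_eq_five_mul h5
  obtain ⟨rfl, rfl⟩ : b = 0 ∧ d = 0 := by simpa [Zsqrtd.ext_iff] using h₃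
  obtain ⟨rfl, rfl⟩ : f = 0 ∧ h = 0 := by simpa [Zsqrtd.ext_iff] using h₄
  obtain ⟨rfl, rfl⟩ : a = 0 ∧ c = 0 := by simpa [Zsqrtd.ext_iff] using h₁
  obtain ⟨rfl, rfl⟩ : e = 0 ∧ g = 0 := by simpa [Zsqrtd.ext_iff] using h₂
  exact hW (by ext i j; fin_cases i <;> fin_cases j <;> simp [Omat, zit, zitBar])

theorem det_Amat : Amat.det = 2 + Complex.I := by
  rw [Amat, det_fin_two_of, alphaG, alphaBarG]
  linear_combination (-(Complex.I ^ 2)) * gold_sq - Complex.I_sq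

theorem one_le_norm_toComplex {z : ℤ[i]} (hz : z ≠ 0) : 1 ≤ ‖(z : ℂ)‖ := by
  have h : (1 : ℝ) ≤ ‖(z : ℂ)‖ ^ 2 := by
    rw [Complex.sq_norm, ← intCast_real_norm]; exact_mod_cast norm_pos.mpr hz
  nlinarith [norm_nonneg (z : ℂ)]

theorem inv_sqrt_five_le_norm_det {X : Matrix (Fin 2) (Fin 2) ℂ} (hX : inG X) (hX₀ : X ≠ 0) :
    (Real.sqrt 5)⁻¹ ≤ ‖X.det‖ := by
  obtain ⟨W, ⟨a, b, c, d, e, f, g, h, rfl⟩, rfl⟩ := hX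
  have hW : Omat a b c d e f g h ≠ 0 := by rintro hW; simp [hW] at hX₀
  have h25 : ‖(2 + Complex.I : ℂ)‖ = Real.sqrt 5 := by
    rw [Complex.norm_def, Complex.normSq_apply]; norm_num
  have hs : 0 < Real.sqrt 5 := by positivity
  rw [det_smul, det_mul, det_Amat, det_Omat, norm_mul, norm_mul, norm_pow, norm_inv,
    Complex.norm_real, Real.norm_of_nonneg hs.le, h25, Fintype.card_fin]
  have := one_le_norm_toComplex (goldNorm_sub_sqrtd_mul_goldNorm_ne_zero hW)
  calc (Real.sqrt 5)⁻¹ = (Real.sqrt 5)⁻¹ ^ 2 * (Real.sqrt 5 * 1) := by field_simp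
    _ ≤ _ := by gcongr

/-- For a block `X = (X₁,…,X_L)` of Golden codewords,
`det(Σᵢ XᵢXᵢᴴ) ≥ (Σᵢ |det Xᵢ|)² ≥ w_H(X)²·(1/5)`. -/
theorem det_block_ge_hamming (L : ℕ) (X : Fin L → Matrix (Fin 2) (Fin 2) ℂ)
    (hX : ∀ k, inG (X k)) :
    (∑ k, ‖(X k).det‖) ^ 2 ≤ ‖(∑ k, X k * (X k)ᴴ).det‖ ∧
    (Set.ncard {k | X k ≠ 0} : ℝ) ^ 2 * (1 / 5) ≤ (∑ k, ‖(X k).det‖) ^ 2 := by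
  classical
  refine ⟨le_norm_of_ofReal_le (sq_sum_norm_det_le_det_sum_mul_conjTranspose Finset.univ X), ?_⟩
  have hcount : (Set.ncard {k | X k ≠ 0} : ℝ) * (Real.sqrt 5)⁻¹ ≤ ∑ k, ‖(X k).det‖ := by
    rw [Set.ncard_eq_toFinset_card', Set.toFinset_ofPred, Finset.card_filter, Nat.cast_sum,
      Finset.sum_mul]
    refine Finset.sum_le_sum fun k _ => ?_
    split_ifs with hk
    · simpa using inv_sqrt_five_le_norm_det (hX k) hk
    · simp
  calc (Set.ncard {k | X k ≠ 0} : ℝ) ^ 2 * (1 / 5)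
      = ((Set.ncard {k | X k ≠ 0} : ℝ) * (Real.sqrt 5)⁻¹) ^ 2 := by
        rw [mul_pow, inv_pow, Real.sq_sqrt (by norm_num)]; norm_num
    _ ≤ _ := by gcongr
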